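/- For every multi-index α ∈ ℕ^D and every θ ∈ ℝ^D, the higher-order derivative of the PQC cost function satisfies D^α C(θ) = 2^{−|α|₁} · Σ_{0 ≤ j ≤ α} (−1)^{|j|₁} · binom(α, j) · C( θ + (π/2)(α − 2j) ), where the sum runs over all multi-indices j with j_k ≤ α_k for all k, binom(α,j) := ∏_k binom(α_k, j_k), and α − 2j is interpreted componentwise as a vector in ℝ^D. -/

import Mathlib

/-!
Since `V² = 1`, each gate is `exp(-iθV/2) W = cos(θ/2) W - i sin(θ/2) V W`, so along any coordinate
line the cost is `a + b cos t + c sin t`, whose derivative is `(f(t + π/2) - f(t - π/2))/2`.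
Differentiable functions obeying this parameter-shift rule in every coordinate form a
translation-invariant space, on which `∂_k` acts as the central difference `δ_k` with step
`π/2`. Central differences live in the group algebra `ℝ[ℝ^D]` acting by translations, so
`D^α C = (∏ δ_k^{α_k}) C`, and since this algebra is commutative the binomial theorem expands the
product into the stated sum of shifted evaluations.
-/

open Matrix Real

/-- The partial derivative `∂_{θ_k} f`. -/
noncomputable def partialDeriv {D : ℕ} (k : Fin D) (f : (Fin D → ℝ) → ℝ) :
    (Fin D → ℝ) → ℝ :=
  fun θ => fderiv ℝ f θ (Pi.single k 1)

/-- The higher-order partial derivative `D^α = ∂_{θ_1}^{α_1} ⋯ ∂_{θ_D}^{α_D}`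
associated with a multi-index `α ∈ ℕ^D`. -/
noncomputable def multiDeriv {D : ℕ} (α : Fin D → ℕ) (f : (Fin D → ℝ) → ℝ) :
    (Fin D → ℝ) → ℝ :=
  ((List.finRange D).flatMap (fun k => List.replicate (α k) k)).foldr partialDeriv f

open Finset AddMonoidAlgebra

section Translation

variable {E : Type*} [AddMonoid E]

noncomputable def translateHom : Multiplicative E →* Module.End ℝ (E → ℝ) where
  toFun a := LinearMap.funLeft ℝ ℝ (· + a.toAdd)
  map_one' := by ext f x; simp
  map_mul' a b := by ext f x; simp [add_assoc]

noncomputable def translateAlgHom : AddMonoidAlgebra ℝ E →ₐ[ℝ] Module.End ℝ (E → ℝ) :=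
  AddMonoidAlgebra.lift ℝ _ E translateHom

lemma translateAlgHom_single (a : E) (r : ℝ) (f : E → ℝ) :
    translateAlgHom (single a r) f = r • fun x => f (x + a) := by
  ext x
  simp [translateAlgHom, translateHom, LinearMap.funLeft]

lemma translateAlgHom_sum_single_apply {ι : Type*} (s : Finset ι) (a : ι → E) (r : ι → ℝ)
    (f : E → ℝ) (x : E) :
    translateAlgHom (∑ i ∈ s, single (a i) (r i)) f x = ∑ i ∈ s, r i * f (x + a i) := by
  simp [map_sum, translateAlgHom_single]

lemma translateAlgHom_mem {S : Submodule ℝ (E → ℝ)}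
    (hS : ∀ a, ∀ f ∈ S, (fun x => f (x + a)) ∈ S) (μ : AddMonoidAlgebra ℝ E) {f : E → ℝ}
    (hf : f ∈ S) : translateAlgHom μ f ∈ S := by
  induction μ using AddMonoidAlgebra.induction_linear with
  | zero => simp [S.zero_mem]
  | add μ ν hμ hν => simpa using S.add_mem hμ hν
  | single a r => simpa [translateAlgHom_single] using S.smul_mem r (hS a f hf)

end Translation

lemma translateAlgHom_comm {E : Type*} [AddCommMonoid E] (μ ν : AddMonoidAlgebra ℝ E)
    (f : E → ℝ) :
    translateAlgHom μ (translateAlgHom ν f) = translateAlgHom ν (translateAlgHom μ f) := by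
  rw [← Module.End.mul_apply, ← map_mul, mul_comm, map_mul, Module.End.mul_apply]

section CentralDifference

variable {E : Type*} [AddCommGroup E]

noncomputable def centralDifference (c : E) : AddMonoidAlgebra ℝ E :=
  single c 2⁻¹ - single (-c) 2⁻¹

lemma translateAlgHom_centralDifference (c : E) (f : E → ℝ) (x : E) :
    translateAlgHom (centralDifference c) f x = (f (x + c) - f (x - c)) / 2 := by
  simp only [centralDifference, sub_eq_add_neg, map_add, map_neg, LinearMap.add_apply,
    translateAlgHom_single, LinearMap.neg_apply, Pi.add_apply, Pi.smul_apply, smul_eq_mul,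
    Pi.neg_apply]
  ring

lemma centralDifference_pow (c : E) (m : ℕ) :
    centralDifference c ^ m =
      ∑ j ∈ range (m + 1), single (((m : ℤ) - 2 * j) • c) ((-1 : ℝ) ^ j * m.choose j / 2 ^ m) := by
  rw [centralDifference, sub_eq_neg_add, ← AddMonoidAlgebra.single_neg, add_pow]
  refine sum_congr rfl fun j hj => ?_
  obtain ⟨k, rfl⟩ := Nat.exists_eq_add_of_le (Nat.lt_succ_iff.mp (mem_range.mp hj))
  rw [AddMonoidAlgebra.single_pow, AddMonoidAlgebra.single_pow, single_mul_single, natCast_def,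
    single_mul_single, Nat.add_sub_cancel_left]
  congr 1
  · rw [add_zero, ← natCast_zsmul, ← natCast_zsmul, smul_neg, ← neg_smul, ← add_smul]
    push_cast
    ring_nf
  · rw [pow_add, neg_pow, inv_pow, inv_pow]
    ring

lemma translateAlgHom_prod_centralDifference_pow_apply {ι : Type*} [Fintype ι] [DecidableEq ι]
    (c : ι → E) (α : ι → ℕ) (f : E → ℝ) (x : E) :
    translateAlgHom (∏ i, centralDifference (c i) ^ α i) f x =
      (1 / 2 ^ (∑ i, α i) : ℝ) * ∑ j ∈ Iic α, (-1 : ℝ) ^ (∑ i, j i) *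
        (∏ i, (α i).choose (j i)) * f (x + ∑ i, ((α i : ℤ) - 2 * j i) • c i) := by
  simp_rw [centralDifference_pow, prod_univ_sum, prod_single, translateAlgHom_sum_single_apply,
    Nat.range_succ_eq_Iic, mul_sum]
  refine sum_congr rfl fun j _ => ?_
  rw [prod_div_distrib, prod_mul_distrib, prod_pow_eq_pow_sum, prod_pow_eq_pow_sum]
  push_cast
  ring

end CentralDifference

section ShiftRule

variable {E ι : Type*} [NormedAddCommGroup E] [NormedSpace ℝ E]

def shiftRuleSubmodule (v : ι → E) (δ : ι → AddMonoidAlgebra ℝ E) : Submodule ℝ (E → ℝ) where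
  carrier := {f | Differentiable ℝ f ∧ ∀ i, (fun x => fderiv ℝ f x (v i)) = translateAlgHom (δ i) f}
  zero_mem' := ⟨differentiable_const 0, fun i => by ext; simp⟩
  add_mem' := by
    rintro f g ⟨hf, hf'⟩ ⟨hg, hg'⟩
    refine ⟨hf.add hg, fun i => ?_⟩
    ext x
    simp [fderiv_add (hf x) (hg x), ← congrFun (hf' i) x, ← congrFun (hg' i) x]
  smul_mem' := by
    rintro r f ⟨hf, hf'⟩
    refine ⟨hf.const_smul r, fun i => ?_⟩
    ext x
    simp [fderiv_const_smul (hf x), ← congrFun (hf' i) x]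

variable {v : ι → E} {δ : ι → AddMonoidAlgebra ℝ E}

lemma comp_add_right_mem_shiftRuleSubmodule {f : E → ℝ} (hf : f ∈ shiftRuleSubmodule v δ)
    (a : E) : (fun x => f (x + a)) ∈ shiftRuleSubmodule v δ := by
  have htrans : (fun x => f (x + a)) = translateAlgHom (single a 1) f := by
    rw [translateAlgHom_single, one_smul]
  refine ⟨hf.1.comp (differentiable_id.add_const a), fun i => ?_⟩
  ext x
  rw [fderiv_comp_add_right, congrFun (hf.2 i), htrans, translateAlgHom_comm,
    translateAlgHom_single, one_smul]

lemma translateAlgHom_mem_shiftRuleSubmodule {f : E → ℝ} (hf : f ∈ shiftRuleSubmodule v δ)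
    (μ : AddMonoidAlgebra ℝ E) : translateAlgHom μ f ∈ shiftRuleSubmodule v δ :=
  translateAlgHom_mem (fun a _ hg => comp_add_right_mem_shiftRuleSubmodule hg a) μ hf

end ShiftRule

section ParamShift

variable {D : ℕ}

noncomputable def paramShift (k : Fin D) : AddMonoidAlgebra ℝ (Fin D → ℝ) :=
  centralDifference ((π / 2) • Pi.single k 1)

noncomputable abbrev paramShiftSubmodule (D : ℕ) : Submodule ℝ ((Fin D → ℝ) → ℝ) :=
  shiftRuleSubmodule (fun k : Fin D => Pi.single k 1) paramShift

lemma foldr_partialDeriv_eq {f : (Fin D → ℝ) → ℝ} (hf : f ∈ paramShiftSubmodule D)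
    (L : List (Fin D)) : L.foldr partialDeriv f = translateAlgHom (L.map paramShift).prod f := by
  induction L with
  | nil => simp
  | cons k L ih =>
    rw [List.foldr_cons, ih, List.map_cons, List.prod_cons, map_mul, Module.End.mul_apply]
    exact (translateAlgHom_mem_shiftRuleSubmodule hf _).2 k

lemma multiDeriv_eq {f : (Fin D → ℝ) → ℝ} (hf : f ∈ paramShiftSubmodule D) (α : Fin D → ℕ) :
    multiDeriv α f = translateAlgHom (∏ k, paramShift k ^ α k) f := by
  rw [multiDeriv, foldr_partialDeriv_eq hf, Fin.prod_univ_def]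
  simp [List.flatMap, List.prod_flatten, List.map_flatten, Function.comp_def]

lemma hasDerivAt_of_eq_trig {g : ℝ → ℝ} {a b c : ℝ}
    (hg : ∀ t, g t = a + b * cos t + c * sin t) (t : ℝ) :
    HasDerivAt g ((g (t + π / 2) - g (t - π / 2)) / 2) t := by
  obtain rfl : g = fun t => a + b * cos t + c * sin t := funext hg
  refine ((((hasDerivAt_cos t).const_mul b).const_add a).add
    ((hasDerivAt_sin t).const_mul c)).congr_deriv ?_
  simp only [cos_add_pi_div_two, sin_add_pi_div_two, cos_sub_pi_div_two, sin_sub_pi_div_two]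
  ring

lemma update_add_eq_add_smul_single {ι : Type*} [DecidableEq ι] (θ : ι → ℝ) (k : ι) (s : ℝ) :
    Function.update θ k (θ k + s) = θ + s • Pi.single k 1 := by
  ext j
  rcases eq_or_ne j k with rfl | h <;> simp [*]

lemma mem_paramShiftSubmodule_of_trig {f : (Fin D → ℝ) → ℝ} (hf : Differentiable ℝ f)
    (htrig : ∀ θ k, ∃ a b c : ℝ, ∀ t, f (Function.update θ k t) = a + b * cos t + c * sin t) :
    f ∈ paramShiftSubmodule D := by
  refine ⟨hf, fun k => funext fun θ => ?_⟩
  obtain ⟨a, b, c, hline⟩ := htrig θ k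
  have hchain : HasDerivAt (fun t => f (Function.update θ k t)) (fderiv ℝ f θ (Pi.single k 1))
      (θ k) := by
    simpa [Function.comp_def] using
      (hf _).hasFDerivAt.comp_hasDerivAt (θ k) (hasDerivAt_update θ k (θ k))
  rw [hchain.unique (hasDerivAt_of_eq_trig hline (θ k)), paramShift,
    translateAlgHom_centralDifference, sub_eq_add_neg (θ k), update_add_eq_add_smul_single,
    update_add_eq_add_smul_single, neg_smul, ← sub_eq_add_neg]

end ParamShift

lemma exp_smul_of_mul_self_eq_one {𝔸 : Type*} [Ring 𝔸] [Algebra ℂ 𝔸] [TopologicalSpace 𝔸]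
    [IsTopologicalRing 𝔸] [ContinuousSMul ℂ 𝔸] [T2Space 𝔸] {V : 𝔸} (hV : V * V = 1) (z : ℂ) :
    NormedSpace.exp (z • V) = Complex.cosh z • 1 + Complex.sinh z • V := by
  have hsq : V ^ 2 = 1 := by rw [sq, hV]
  rw [NormedSpace.exp_eq_tsum ℂ]
  refine HasSum.tsum_eq (HasSum.even_add_odd ?_ ?_)
  · convert (Complex.hasSum_cosh z).smul_const (1 : 𝔸) using 2 with m
    rw [smul_pow, pow_mul V, hsq, one_pow, smul_smul, div_eq_inv_mul]
  · convert (Complex.hasSum_sinh z).smul_const V using 2 with m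
    rw [smul_pow, pow_succ V, pow_mul V, hsq, one_pow, one_mul, smul_smul, div_eq_inv_mul]

lemma List.exists_prod_map_update_eq_mul {ι M : Type*} [DecidableEq ι] [Monoid M] {l : List ι}
    (hl : l.Nodup) {k : ι} (hk : k ∈ l) (F : ι → M) :
    ∃ P Q : M, ∀ Z, (l.map (Function.update F k Z)).prod = P * Z * Q := by
  obtain ⟨s, t, rfl⟩ := List.append_of_mem hk
  have hks : k ∉ s := fun h => (List.nodup_append.mp hl).2.2 k h k List.mem_cons_self rfl
  have hkt : k ∉ t := (List.nodup_cons.mp (List.nodup_append.mp hl).2.1).1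
  refine ⟨(s.map F).prod, (t.map F).prod, fun Z => ?_⟩
  rw [List.map_append, List.map_cons, List.prod_append, List.prod_cons, Function.update_self,
    List.map_congr_left fun j hj => Function.update_of_ne (ne_of_mem_of_not_mem hj hks) Z F,
    List.map_congr_left fun j hj => Function.update_of_ne (ne_of_mem_of_not_mem hj hkt) Z F,
    mul_assoc]

section Circuit

variable {n ι : Type*} [Fintype n]

noncomputable def expectation (H : Matrix n n ℂ) (ψ : n → ℂ) : ℝ := (star ψ ⬝ᵥ (H *ᵥ ψ)).re

lemma Differentiable.expectation {E : Type*} [NormedAddCommGroup E] [NormedSpace ℝ E]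
    (H : Matrix n n ℂ) {ψ : E → n → ℂ} (hψ : Differentiable ℝ ψ) :
    Differentiable ℝ fun x => expectation H (ψ x) := by
  simp only [_root_.expectation, dotProduct, mulVec]
  fun_prop

lemma exists_expectation_cos_half_add_sin_half (H : Matrix n n ℂ) (u w : n → ℂ) :
    ∃ a b c : ℝ, ∀ t : ℝ, expectation H ((cos (t / 2) : ℂ) • u + (sin (t / 2) : ℂ) • w) =
      a + b * cos t + c * sin t := by
  set q := (star u ⬝ᵥ (H *ᵥ w) + star w ⬝ᵥ (H *ᵥ u)).re
  have hexpand : ∀ x y : ℝ, expectation H ((x : ℂ) • u + (y : ℂ) • w) =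
      x ^ 2 * expectation H u + x * y * q + y ^ 2 * expectation H w := by
    intro x y
    simp only [expectation, q, star_add, star_smul, mulVec_add, mulVec_smul, add_dotProduct,
      dotProduct_add, smul_dotProduct, dotProduct_smul, smul_eq_mul, RCLike.star_def,
      Complex.conj_ofReal, Complex.add_re, Complex.re_ofReal_mul]
    ring
  refine ⟨(expectation H u + expectation H w) / 2, (expectation H u - expectation H w) / 2,
    q / 2, fun t => ?_⟩
  obtain ⟨s, rfl⟩ : ∃ s, t = 2 * s := ⟨t / 2, by ring⟩
  rw [mul_div_cancel_left₀ s two_ne_zero, hexpand, cos_two_mul, sin_two_mul]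
  linear_combination expectation H w * sin_sq_add_cos_sq s

variable [DecidableEq n]

noncomputable def gate (V W : Matrix n n ℂ) (s : ℝ) : Matrix n n ℂ :=
  NormedSpace.exp ((-Complex.I * ((s : ℂ) / 2)) • V) * W

lemma gate_eq {V : Matrix n n ℂ} (hV : V * V = 1) (W : Matrix n n ℂ) (s : ℝ) :
    gate V W s = (cos (s / 2) : ℂ) • W + (sin (s / 2) : ℂ) • (-Complex.I • V * W) := by
  rw [gate, exp_smul_of_mul_self_eq_one hV, neg_mul, Complex.cosh_neg, Complex.sinh_neg,
    mul_comm, Complex.cosh_mul_I, Complex.sinh_mul_I, add_mul, smul_mul_assoc, one_mul,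
    smul_mul_assoc, smul_mul_assoc, smul_smul]
  push_cast
  congr 2
  ring

lemma differentiable_list_prod_mulVec {E : Type*} [NormedAddCommGroup E] [NormedSpace ℝ E]
    (l : List ι) {F : ι → E → Matrix n n ℂ}
    (hF : ∀ k ∈ l, ∀ i j, Differentiable ℝ fun x => F k x i j) (v : n → ℂ) :
    Differentiable ℝ fun x => (l.map (F · x)).prod *ᵥ v := by
  induction l with
  | nil => simp
  | cons k l ih =>
    have hk := hF k List.mem_cons_self
    have hψ := ih fun k' hk' => hF k' (List.mem_cons_of_mem k hk')
    simp only [List.map_cons, List.prod_cons, ← mulVec_mulVec]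
    rw [differentiable_pi] at hψ ⊢
    intro i
    simp only [mulVec, dotProduct] at hψ ⊢
    have := hk i
    fun_prop

variable [DecidableEq ι] {V W : ι → Matrix n n ℂ}

lemma exists_expectation_update_eq_trig (hV : ∀ k, V k * V k = 1) {l : List ι} (hl : l.Nodup)
    {k : ι} (hk : k ∈ l) (H : Matrix n n ℂ) (e₀ : n → ℂ) (θ : ι → ℝ) :
    ∃ a b c : ℝ, ∀ t, expectation H
      ((l.map fun j => gate (V j) (W j) (Function.update θ k t j)).prod *ᵥ e₀) =
        a + b * cos t + c * sin t := by
  obtain ⟨P, Q, hPQ⟩ := List.exists_prod_map_update_eq_mul hl hk fun j => gate (V j) (W j) (θ j)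
  obtain ⟨a, b, c, h⟩ := exists_expectation_cos_half_add_sin_half H ((P * W k * Q) *ᵥ e₀)
    ((P * (-Complex.I • V k * W k) * Q) *ᵥ e₀)
  refine ⟨a, b, c, fun t => ?_⟩
  rw [← h t]
  congr 1
  simp_rw [Function.apply_update (fun j => gate (V j) (W j))]
  rw [hPQ, gate_eq (hV k), mul_add, add_mul, mul_smul_comm, mul_smul_comm, smul_mul_assoc,
    smul_mul_assoc, add_mulVec, smul_mulVec, smul_mulVec]

lemma expectation_circuit_mem_paramShiftSubmodule {D : ℕ} {V W : Fin D → Matrix n n ℂ}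
    (hV : ∀ k, V k * V k = 1) {l : List (Fin D)} (hl : l.Nodup) (hmem : ∀ k, k ∈ l)
    (H : Matrix n n ℂ) (e₀ : n → ℂ) :
    (fun θ => expectation H ((l.map fun k => gate (V k) (W k) (θ k)).prod *ᵥ e₀)) ∈
      paramShiftSubmodule D := by
  refine mem_paramShiftSubmodule_of_trig ?_
    fun θ k => exists_expectation_update_eq_trig hV hl (hmem k) H e₀ θ
  refine (differentiable_list_prod_mulVec l (fun k _ i j => ?_) e₀).expectation H
  simp only [gate_eq (hV k), Matrix.add_apply, Matrix.smul_apply, smul_eq_mul]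
  fun_prop

end Circuit

theorem stmt2_general (N D : ℕ)
    (W V : Fin D → Matrix (Fin (2 ^ N)) (Fin (2 ^ N)) ℂ)
    (hVinv : ∀ k, V k * V k = 1)
    (H : Matrix (Fin (2 ^ N)) (Fin (2 ^ N)) ℂ)
    (e₀ : Fin (2 ^ N) → ℂ)
    (U : (Fin D → ℝ) → Matrix (Fin (2 ^ N)) (Fin (2 ^ N)) ℂ)
    (hU : ∀ θ, U θ = ((List.finRange D).reverse.map
        (fun k => NormedSpace.exp ((-Complex.I * ((θ k : ℂ) / 2)) • V k) * W k)).prod)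
    (C : (Fin D → ℝ) → ℝ)
    (hC : ∀ θ, (C θ : ℂ) = star (U θ *ᵥ e₀) ⬝ᵥ (H *ᵥ (U θ *ᵥ e₀)))
    (α : Fin D → ℕ) (θ : Fin D → ℝ) :
    multiDeriv α C θ =
      (1 / 2 ^ (∑ k, α k) : ℝ) * ∑ j ∈ Finset.Iic α,
        (-1 : ℝ) ^ (∑ k, j k) * (∏ k, (α k).choose (j k)) *
          C (θ + (π / 2) • fun k => ((α k : ℝ) - 2 * (j k : ℝ))) := by
  have hCU : C = fun θ => expectation H
      (((List.finRange D).reverse.map fun k => gate (V k) (W k) (θ k)).prod *ᵥ e₀) := by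
    ext θ
    rw [expectation, ← Complex.ofReal_re (C θ), hC, hU]
    rfl
  have hC_mem : C ∈ paramShiftSubmodule D := hCU ▸
    expectation_circuit_mem_paramShiftSubmodule hVinv
      (List.nodup_reverse.mpr (List.nodup_finRange D))
      (fun k => List.mem_reverse.mpr (List.mem_finRange k)) H e₀
  have hshift (j : Fin D → ℕ) :
      ∑ k, ((α k : ℤ) - 2 * j k) • (π / 2) • (Pi.single k 1 : Fin D → ℝ) =
        (π / 2) • fun k => (α k : ℝ) - 2 * j k := by
    ext i
    simp [Finset.sum_apply, Pi.single_apply]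
  simp only [multiDeriv_eq hC_mem, paramShift, translateAlgHom_prod_centralDifference_pow_apply,
    hshift]

/-- For every multi-index `α ∈ ℕ^D` and every `θ ∈ ℝ^D`, the higher-order
derivative of the PQC cost function satisfies the higher-order parameter-shift rule
`D^α C(θ) = 2^{−|α|₁} Σ_{0 ≤ j ≤ α} (−1)^{|j|₁} binom(α,j) C(θ + (π/2)(α − 2j))`. -/
theorem stmt2 (N D : ℕ) (hN : 1 ≤ N) (hD : 1 ≤ D)
    (W V : Fin D → Matrix (Fin (2 ^ N)) (Fin (2 ^ N)) ℂ)
    (hW : ∀ k, (W k)ᴴ * W k = 1 ∧ W k * (W k)ᴴ = 1)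
    (hVherm : ∀ k, (V k)ᴴ = V k) (hVinv : ∀ k, V k * V k = 1)
    (H : Matrix (Fin (2 ^ N)) (Fin (2 ^ N)) ℂ) (hH : Hᴴ = H)
    (e₀ : Fin (2 ^ N) → ℂ) (he₀ : e₀ = fun i : Fin (2 ^ N) => if (i : ℕ) = 0 then (1 : ℂ) else 0)
    (U : (Fin D → ℝ) → Matrix (Fin (2 ^ N)) (Fin (2 ^ N)) ℂ)
    (hU : ∀ θ, U θ = ((List.finRange D).reverse.map
        (fun k => NormedSpace.exp ((-Complex.I * ((θ k : ℂ) / 2)) • V k) * W k)).prod)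
    (C : (Fin D → ℝ) → ℝ)
    (hC : ∀ θ, (C θ : ℂ) = star (U θ *ᵥ e₀) ⬝ᵥ (H *ᵥ (U θ *ᵥ e₀)))
    (α : Fin D → ℕ) (θ : Fin D → ℝ) :
    multiDeriv α C θ =
      (1 / 2 ^ (∑ k, α k) : ℝ) * ∑ j ∈ Finset.Iic α,
        (-1 : ℝ) ^ (∑ k, j k) * (∏ k, (α k).choose (j k)) *
          C (θ + (π / 2) • fun k => ((α k : ℝ) - 2 * (j k : ℝ))) :=
  stmt2_general N D W V hVinv H e₀ U hU C hC α θ
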